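/- arXiv:2410.10800 — 11 statements merged into one kernel-verified Lean document; each statement's English description precedes it below -/
import Mathlib

section
/- For all t in [0, 3), e^t - t - 1 ≤ t^2 / (2 - (2/3)t). -/
theorem phi_upper_bound (t : ℝ) (ht0 : 0 ≤ t) (ht3 : t < 3) :
    Real.exp t - t - 1 ≤ t ^ 2 / (2 - (2 / 3) * t) := by
  set g : ℝ → ℝ := fun s => (Real.exp s - s - 1) * (2 - 2 / 3 * s) - s ^ 2 with hgdef
  set f1 : ℝ → ℝ := fun s => Real.exp s * (4 / 3 - 2 / 3 * s) - 4 / 3 - 2 / 3 * s with hf1def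
  have hg : ∀ s : ℝ, HasDerivAt g (f1 s) s := by
    intro s
    have h1 : HasDerivAt (fun s : ℝ => Real.exp s - s - 1) (Real.exp s - 1) s := by
      simpa using ((Real.hasDerivAt_exp s).sub (hasDerivAt_id s)).sub_const 1
    have h2 : HasDerivAt (fun s : ℝ => 2 - 2 / 3 * s) (-(2 / 3)) s := by
      simpa [Pi.sub_def] using (hasDerivAt_const s 2).sub ((hasDerivAt_id s).const_mul (2 / 3 : ℝ))
    have h3 := (h1.mul h2).sub ((hasDerivAt_pow 2 s))
    exact h3.congr_deriv (by simp only [hf1def]; push_cast; ring)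
  have hf1 : ∀ s : ℝ, HasDerivAt f1 (Real.exp s * (2 / 3 - 2 / 3 * s) - 2 / 3) s := by
    intro s
    have h2 : HasDerivAt (fun s : ℝ => 4 / 3 - 2 / 3 * s) (-(2 / 3)) s := by
      simpa [Pi.sub_def] using (hasDerivAt_const s (4 / 3 : ℝ)).sub ((hasDerivAt_id s).const_mul (2 / 3 : ℝ))
    have h3 := (((Real.hasDerivAt_exp s).mul h2).sub_const (4 / 3)).sub
      ((hasDerivAt_id s).const_mul (2 / 3 : ℝ))
    exact h3.congr_deriv (by ring)
  have hderiv_nonpos : ∀ s : ℝ, Real.exp s * (2 / 3 - 2 / 3 * s) - 2 / 3 ≤ 0 := by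
    intro s
    have h1 : -s + 1 ≤ Real.exp (-s) := Real.add_one_le_exp (-s)
    have h2 : Real.exp (-s) * Real.exp s = 1 := by
      rw [← Real.exp_add]; simp
    nlinarith [Real.exp_pos s, Real.exp_pos (-s)]
  have hf1anti : Antitone f1 := by
    apply antitone_of_deriv_nonpos
    · exact fun s => (hf1 s).differentiableAt
    · intro s
      rw [(hf1 s).deriv]
      exact hderiv_nonpos s
  have hf1nonpos : ∀ s : ℝ, 0 ≤ s → f1 s ≤ 0 := by
    intro s hs
    have := hf1anti hs
    simp only [hf1def, Real.exp_zero] at this ⊢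
    linarith
  have hganti : AntitoneOn g (Set.Ici 0) := by
    apply antitoneOn_of_deriv_nonpos (convex_Ici 0)
    · exact (Continuous.continuousOn (by fun_prop))
    · intro s hs
      exact ((hg s).differentiableAt).differentiableWithinAt
    · intro s hs
      rw [(hg s).deriv]
      rw [interior_Ici] at hs
      exact hf1nonpos s (le_of_lt hs)
  have hgle : g t ≤ 0 := by
    have := hganti (Set.self_mem_Ici) (Set.mem_Ici.mpr ht0) ht0
    simpa [hgdef, Real.exp_zero] using this
  have hpos : 0 < 2 - 2 / 3 * t := by linarith
  rw [le_div_iff₀ hpos]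
  simp only [hgdef] at hgle
  linarith
end

section
/- Let f: ℝ^d → ℝ be twice continuously differentiable with ‖∇²f(x)‖ ≤ L₀ + L₁‖∇f(x)‖ for all x, where L₀ ≥ 0, L₁ > 0. Then for all x, y: ‖∇f(y) - ∇f(x)‖ ≤ (L₀ + L₁‖∇f(x)‖)(e^{L₁‖y-x‖} - 1)/L₁. -/
private lemma hess_norm_le_iteratedFDeriv_two {d : ℕ}
    (f : EuclideanSpace ℝ (Fin d) → ℝ) (z : EuclideanSpace ℝ (Fin d)) :
    ‖fderiv ℝ (fderiv ℝ f) z‖ ≤ ‖iteratedFDeriv ℝ 2 f z‖ := by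
  refine ContinuousLinearMap.opNorm_le_bound _ (norm_nonneg _) fun u => ?_
  refine ContinuousLinearMap.opNorm_le_bound _
    (mul_nonneg (norm_nonneg _) (norm_nonneg _)) fun w => ?_
  have h2 := iteratedFDeriv_two_apply (𝕜 := ℝ) f z ![u, w]
  simp only [Matrix.cons_val_zero, Matrix.cons_val_one, Matrix.head_cons] at h2
  rw [← h2]
  calc ‖iteratedFDeriv ℝ 2 f z ![u, w]‖
      ≤ ‖iteratedFDeriv ℝ 2 f z‖ * ∏ i, ‖![u, w] i‖ :=
        ContinuousMultilinearMap.le_opNorm _ _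
    _ = ‖iteratedFDeriv ℝ 2 f z‖ * ‖u‖ * ‖w‖ := by
        rw [Fin.prod_univ_two]; simp [mul_assoc]

theorem grad_lipschitz_of_L0L1_smooth {d : ℕ}
    (f : EuclideanSpace ℝ (Fin d) → ℝ) (L₀ L₁ : ℝ)
    (hL₀ : 0 ≤ L₀) (hL₁ : 0 < L₁)
    (hf : ContDiff ℝ 2 f)
    (hsmooth : ∀ x, ‖iteratedFDeriv ℝ 2 f x‖ ≤ L₀ + L₁ * ‖gradient f x‖) :
    ∀ x y, ‖gradient f y - gradient f x‖ ≤
      (L₀ + L₁ * ‖gradient f x‖) * (Real.exp (L₁ * ‖y - x‖) - 1) / L₁ := by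
  intro x y
  by_cases hxy : y = x
  · subst hxy
    simp
  -- translate gradient statements into fderiv statements via the isometry toDual.symm
  have hiso : ∀ z w : EuclideanSpace ℝ (Fin d),
      ‖gradient f z - gradient f w‖ = ‖fderiv ℝ f z - fderiv ℝ f w‖ := by
    intro z w
    show ‖(InnerProductSpace.toDual ℝ (EuclideanSpace ℝ (Fin d))).symm (fderiv ℝ f z) -
      (InnerProductSpace.toDual ℝ (EuclideanSpace ℝ (Fin d))).symm (fderiv ℝ f w)‖ = _
    rw [← map_sub, LinearIsometryEquiv.norm_map]
  have hiso1 : ∀ z : EuclideanSpace ℝ (Fin d), ‖gradient f z‖ = ‖fderiv ℝ f z‖ := by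
    intro z
    exact LinearIsometryEquiv.norm_map _ (fderiv ℝ f z)
  set v := y - x with hv
  have hvpos : 0 < ‖v‖ := by
    rw [hv, norm_pos_iff, sub_ne_zero]
    exact hxy
  -- second derivative bound
  have hHess : ∀ z, ‖fderiv ℝ (fderiv ℝ f) z‖ ≤ ‖iteratedFDeriv ℝ 2 f z‖ :=
    hess_norm_le_iteratedFDeriv_two f
  have hdf : Differentiable ℝ (fderiv ℝ f) :=
    (hf.fderiv_right (m := 1) (by norm_num)).differentiable one_ne_zero
  -- the curve and its derivative
  set h : ℝ → (EuclideanSpace ℝ (Fin d) →L[ℝ] ℝ) :=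
    fun t => fderiv ℝ f (x + t • v) - fderiv ℝ f x with hh_def
  set h' : ℝ → (EuclideanSpace ℝ (Fin d) →L[ℝ] ℝ) :=
    fun t => fderiv ℝ (fderiv ℝ f) (x + t • v) v with hh'_def
  have hh : ∀ t : ℝ, HasDerivAt h (h' t) t := by
    intro t
    have hc : HasDerivAt (fun t : ℝ => x + t • v) v t := by
      simpa using ((hasDerivAt_id t).smul_const v).const_add x
    have h1 : HasDerivAt (fun t : ℝ => fderiv ℝ f (x + t • v))
        (fderiv ℝ (fderiv ℝ f) (x + t • v) v) t :=
      (hdf (x + t • v)).hasFDerivAt.comp_hasDerivAt t hc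
    exact h1.sub_const (fderiv ℝ f x)
  set K := L₁ * ‖v‖ with hK
  set ε := (L₀ + L₁ * ‖gradient f x‖) * ‖v‖ with hε
  have key := norm_le_gronwallBound_of_norm_deriv_right_le (a := 0) (b := 1)
    (δ := 0) (K := K) (ε := ε) (f := h) (f' := h')
    (fun t _ => (hh t).continuousAt.continuousWithinAt)
    (fun t _ => (hh t).hasDerivWithinAt)
    (by simp [hh_def])
    (fun t _ => by
      have hb1 : ‖h' t‖ ≤ ‖iteratedFDeriv ℝ 2 f (x + t • v)‖ * ‖v‖ :=
        le_trans (ContinuousLinearMap.le_opNorm _ _)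
          (mul_le_mul_of_nonneg_right (hHess _) (norm_nonneg _))
      have hb2 := hsmooth (x + t • v)
      have hb3 : ‖fderiv ℝ f (x + t • v)‖ ≤ ‖fderiv ℝ f x‖ + ‖h t‖ := by
        have hd : fderiv ℝ f (x + t • v) = fderiv ℝ f x + h t := by
          simp [hh_def]
        rw [hd]
        exact norm_add_le _ _
      have hgr : ‖gradient f (x + t • v)‖ ≤ ‖gradient f x‖ + ‖h t‖ := by
        rw [hiso1, hiso1]; exact hb3
      have hv0 : (0:ℝ) ≤ ‖v‖ := norm_nonneg _
      have hht0 : (0:ℝ) ≤ ‖h t‖ := norm_nonneg _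
      calc ‖h' t‖
          ≤ (L₀ + L₁ * ‖gradient f (x + t • v)‖) * ‖v‖ :=
            le_trans hb1 (mul_le_mul_of_nonneg_right hb2 hv0)
        _ ≤ K * ‖h t‖ + ε := by
            rw [hK, hε]
            nlinarith [mul_le_mul_of_nonneg_right hgr hv0, hL₁.le]) 1 (by norm_num)
  have h1eq : ‖h 1‖ = ‖gradient f y - gradient f x‖ := by
    rw [hiso]
    simp [hh_def, hv]
  have hKne : K ≠ 0 := ne_of_gt (mul_pos hL₁ hvpos)
  rw [gronwallBound_of_K_ne_0 hKne] at key
  rw [← h1eq]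
  have hεK : ε / K = (L₀ + L₁ * ‖gradient f x‖) / L₁ := by
    rw [hε, hK, mul_comm L₁ ‖v‖, mul_comm (L₀ + L₁ * ‖gradient f x‖) ‖v‖,
      mul_div_mul_left _ _ (ne_of_gt hvpos)]
  calc ‖h 1‖ ≤ 0 * Real.exp (K * (1 - 0)) + ε / K * (Real.exp (K * (1 - 0)) - 1) := key
    _ = (L₀ + L₁ * ‖gradient f x‖) * (Real.exp (L₁ * ‖y - x‖) - 1) / L₁ := by
        have hKv : K * (1 - 0) = L₁ * ‖y - x‖ := by rw [hK, hv]; ring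
        rw [zero_mul, zero_add, hεK, div_mul_eq_mul_div, hKv]
end

section
/- Let f: ℝ^d → ℝ be twice continuously differentiable with ‖∇²f(x)‖ ≤ L₀ + L₁‖∇f(x)‖ for all x, where L₀ ≥ 0, L₁ > 0. Then for all x, y: |f(y) - f(x) - ⟨∇f(x), y - x⟩| ≤ (L₀ + L₁‖∇f(x)‖) · φ(L₁‖y - x‖)/L₁², where φ(t) = e^t - t - 1. -/
open RealInnerProductSpace

set_option maxHeartbeats 1000000 in
theorem descent_bound_of_L0L1_smooth {d : ℕ}
    (f : EuclideanSpace ℝ (Fin d) → ℝ) (L₀ L₁ : ℝ)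
    (hL₀ : 0 ≤ L₀) (hL₁ : 0 < L₁)
    (hf : ContDiff ℝ 2 f)
    (hsmooth : ∀ x, ‖iteratedFDeriv ℝ 2 f x‖ ≤ L₀ + L₁ * ‖gradient f x‖) :
    ∀ x y, |f y - f x - ⟪gradient f x, y - x⟫| ≤
      (L₀ + L₁ * ‖gradient f x‖) *
        (Real.exp (L₁ * ‖y - x‖) - L₁ * ‖y - x‖ - 1) / L₁ ^ 2 := by
  intro x y
  set v : EuclideanSpace ℝ (Fin d) := y - x with hv
  set A := L₀ + L₁ * ‖gradient f x‖ with hA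
  have hA0 : 0 ≤ A := add_nonneg hL₀ (mul_nonneg hL₁.le (norm_nonneg _))
  set r := L₁ * ‖v‖ with hr
  have hr0 : 0 ≤ r := mul_nonneg hL₁.le (norm_nonneg _)
  set γ : ℝ → EuclideanSpace ℝ (Fin d) := fun t => x + t • v with hγ
  have hγd : ∀ t : ℝ, HasDerivAt γ v t := by
    intro t
    have h := ((hasDerivAt_id t).smul_const v).const_add x
    rw [one_smul] at h
    exact h
  have hf1 : ContDiff ℝ 1 (fderiv ℝ f) := hf.fderiv_right (by norm_num)
  have hDf : ∀ z, HasFDerivAt (fderiv ℝ f) (fderiv ℝ (fderiv ℝ f) z) z := fun z =>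
    ((hf1.differentiable (by norm_num)) z).hasFDerivAt
  set D : EuclideanSpace ℝ (Fin d) → (EuclideanSpace ℝ (Fin d) →L[ℝ] EuclideanSpace ℝ (Fin d) →L[ℝ] ℝ) := fun z => fderiv ℝ (fderiv ℝ f) z with hD
  have hDnorm : ∀ z (u : EuclideanSpace ℝ (Fin d)), ‖D z u‖ ≤ ‖iteratedFDeriv ℝ 2 f z‖ * ‖u‖ := by
    intro z u
    refine ContinuousLinearMap.opNorm_le_bound _
      (mul_nonneg (norm_nonneg _) (norm_nonneg _)) (fun w => ?_)
    have h2 : D z u w = iteratedFDeriv ℝ 2 f z ![u, w] := by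
      rw [iteratedFDeriv_two_apply]
      simp [hD]
    rw [h2]
    calc ‖iteratedFDeriv ℝ 2 f z ![u, w]‖
        ≤ ‖iteratedFDeriv ℝ 2 f z‖ * ∏ i, ‖![u, w] i‖ :=
          ContinuousMultilinearMap.le_opNorm _ _
      _ = ‖iteratedFDeriv ℝ 2 f z‖ * ‖u‖ * ‖w‖ := by
          rw [Fin.prod_univ_two]; simp [mul_assoc]
  set e : StrongDual ℝ (EuclideanSpace ℝ (Fin d)) ≃L[ℝ] EuclideanSpace ℝ (Fin d) :=
    (InnerProductSpace.toDual ℝ (EuclideanSpace ℝ (Fin d))).symm.toContinuousLinearEquiv with he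
  have hgradz : ∀ z, gradient f z = e (fderiv ℝ f z) := fun z => rfl
  have henorm : ∀ u : StrongDual ℝ (EuclideanSpace ℝ (Fin d)), ‖e u‖ = ‖u‖ := fun u =>
    (InnerProductSpace.toDual ℝ (EuclideanSpace ℝ (Fin d))).symm.norm_map u
  set g : ℝ → EuclideanSpace ℝ (Fin d) := fun t => gradient f (γ t) - gradient f x with hg
  have hgd : ∀ t, HasDerivAt g (e (D (γ t) v)) t := by
    intro t
    have h1 : HasDerivAt (fun t => fderiv ℝ f (γ t)) (D (γ t) v) t :=
      (hDf (γ t)).comp_hasDerivAt t (hγd t)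
    have h2 : HasDerivAt (fun t => e (fderiv ℝ f (γ t))) (e (D (γ t) v)) t :=
      (e.hasFDerivAt.comp_hasDerivAt t h1 : )
    simpa [hg, hgradz] using h2.sub_const (gradient f x)
  have hbound : ∀ t ∈ Set.Ico (0:ℝ) 1, ‖e (D (γ t) v)‖ ≤ r * ‖g t‖ + A * ‖v‖ := by
    intro t _
    rw [henorm]
    calc ‖D (γ t) v‖ ≤ ‖iteratedFDeriv ℝ 2 f (γ t)‖ * ‖v‖ := hDnorm _ _
      _ ≤ (L₀ + L₁ * ‖gradient f (γ t)‖) * ‖v‖ := by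
          exact mul_le_mul_of_nonneg_right (hsmooth _) (norm_nonneg _)
      _ ≤ (A + L₁ * ‖g t‖) * ‖v‖ := by
          have heq : gradient f (γ t) = gradient f x + g t := by simp [hg]
          have : ‖gradient f (γ t)‖ ≤ ‖gradient f x‖ + ‖g t‖ := by
            rw [heq]; exact norm_add_le _ _
          nlinarith [norm_nonneg v, norm_nonneg (g t)]
      _ = r * ‖g t‖ + A * ‖v‖ := by rw [hr]; ring
  have hgron : ∀ t ∈ Set.Icc (0:ℝ) 1, ‖g t‖ ≤ gronwallBound 0 r (A * ‖v‖) (t - 0) := by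
    refine norm_le_gronwallBound_of_norm_deriv_right_le
      (fun t _ => ((hgd t).continuousAt).continuousWithinAt)
      (fun t _ => (hgd t).hasDerivWithinAt) (by simp [hg, hγ]) hbound
  have hgbound : ∀ t ∈ Set.Icc (0:ℝ) 1, ‖g t‖ ≤ A * (Real.exp (r * t) - 1) / L₁ := by
    intro t ht
    refine (hgron t ht).trans ?_
    rcases eq_or_ne r 0 with h0 | h0
    · have hv0 : ‖v‖ = 0 := by
        have := hr ▸ h0
        nlinarith
      simp [gronwallBound, h0, hv0]
    · rw [gronwallBound_of_K_ne_0 h0]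
      have hvne : ‖v‖ ≠ 0 := fun h => h0 (by rw [hr, h, mul_zero])
      have hkey : A * ‖v‖ / r = A / L₁ := by
        rw [hr]; field_simp
      simp only [sub_zero, zero_mul, zero_add]
      rw [hkey]
      exact le_of_eq (by ring)
  have hfd : ∀ z, HasFDerivAt f (fderiv ℝ f z) z := fun z =>
    ((hf.differentiable (by norm_num)) z).hasFDerivAt
  have hinner : ∀ z (u : EuclideanSpace ℝ (Fin d)), ⟪gradient f z, u⟫ = fderiv ℝ f z u :=
    fun z u => InnerProductSpace.toDual_symm_apply
  set h : ℝ → ℝ := fun t => f (γ t) - f x - t * ⟪gradient f x, v⟫ with hh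
  have hhd : ∀ t, HasDerivAt h (⟪g t, v⟫) t := by
    intro t
    have h1 : HasDerivAt (fun t => f (γ t)) (fderiv ℝ f (γ t) v) t :=
      (hfd (γ t)).comp_hasDerivAt t (hγd t)
    have h2 : HasDerivAt h (fderiv ℝ f (γ t) v - ⟪gradient f x, v⟫) t := by
      exact (h1.sub_const (f x)).sub (hasDerivAt_mul_const (⟪gradient f x, v⟫))
    have h3 : fderiv ℝ f (γ t) v - ⟪gradient f x, v⟫ = ⟪g t, v⟫ := by
      rw [← hinner, hg]
      simp [inner_sub_left]
    rwa [h3] at h2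
  set B : ℝ → ℝ := fun t => A * (Real.exp (r * t) - r * t - 1) / L₁ ^ 2 with hB
  have hBd : ∀ t, HasDerivAt B (A * (Real.exp (r * t) - 1) / L₁ * ‖v‖) t := by
    intro t
    have he1 : HasDerivAt (fun t : ℝ => Real.exp (r * t)) (Real.exp (r * t) * r) t := by
      simpa using ((hasDerivAt_id t).const_mul r).exp
    have he2 : HasDerivAt (fun t : ℝ => r * t) r t := by
      simpa using (hasDerivAt_id t).const_mul r
    have h4 : HasDerivAt B (A * (Real.exp (r * t) * r - r) / L₁ ^ 2) t := by
      exact (((he1.sub he2).sub_const 1).const_mul A).div_const (L₁ ^ 2)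
    convert h4 using 1
    rw [hr]
    field_simp
  have hbnd : ∀ t ∈ Set.Ico (0:ℝ) 1, ‖⟪g t, v⟫‖ ≤ A * (Real.exp (r * t) - 1) / L₁ * ‖v‖ := by
    intro t ht
    calc ‖⟪g t, v⟫‖ ≤ ‖g t‖ * ‖v‖ := by
          rw [Real.norm_eq_abs]; exact abs_real_inner_le_norm _ _
      _ ≤ A * (Real.exp (r * t) - 1) / L₁ * ‖v‖ :=
          mul_le_mul_of_nonneg_right
            ((hgbound t (Set.Ico_subset_Icc_self ht)).trans (le_of_eq (by ring)))
            (norm_nonneg v)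
  have hfinal : ‖h 1‖ ≤ B 1 := by
    refine image_norm_le_of_norm_deriv_right_le_deriv_boundary
      (fun t _ => ((hhd t).continuousAt).continuousWithinAt)
      (fun t _ => (hhd t).hasDerivWithinAt) ?_ hBd hbnd (Set.right_mem_Icc.mpr zero_le_one)
    simp [hh, hB, hγ]
  have hγ1 : γ 1 = y := by simp [hγ, hv]
  rw [Real.norm_eq_abs, hh] at hfinal
  simp only [hγ1, one_mul] at hfinal
  calc |f y - f x - ⟪gradient f x, y - x⟫| = |f y - f x - ⟪gradient f x, v⟫| := by rw [hv]
    _ ≤ B 1 := hfinal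
    _ = A * (Real.exp (L₁ * ‖y - x‖) - L₁ * ‖y - x‖ - 1) / L₁ ^ 2 := by
        simp only [hB, hr, hv, mul_one]
end

section
/- Let f: ℝ^d → ℝ be convex, twice continuously differentiable, (L₀, L₁)-smooth with L₁ > 0, and nonlinear (so L₀ + L₁‖∇f(x)‖ > 0 everywhere). Then for all x, y ∈ ℝ^d: f(y) ≥ f(x) + ⟨∇f(x), y - x⟩ + (a/L₁²)·φ*(L₁‖∇f(y) - ∇f(x)‖/a), where a = L₀ + L₁‖∇f(y)‖ and φ*(γ) = (1+γ)ln(1+γ) - γ. -/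
open RealInnerProductSpace

section Aux

variable {E : Type*} [NormedAddCommGroup E] [InnerProductSpace ℝ E] [CompleteSpace E]

lemma grad_inner_eq (f : E → ℝ) (x u : E) : ⟪gradient f x, u⟫ = fderiv ℝ f x u :=
  InnerProductSpace.toDual_symm_apply

lemma convex_first_order (f : E → ℝ) (hd : Differentiable ℝ f)
    (hconv : ConvexOn ℝ Set.univ f) (x y : E) :
    f x + ⟪gradient f x, y - x⟫ ≤ f y := by
  have hcder : ∀ t : ℝ, HasDerivAt (fun t : ℝ => t • (y - x) + x) (y - x) t := fun t => by
    simpa using ((hasDerivAt_id t).smul_const (y - x)).add_const x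
  have hg : ∀ t : ℝ, HasDerivAt (fun t : ℝ => f (t • (y - x) + x))
      (fderiv ℝ f (t • (y - x) + x) (y - x)) t :=
    fun t => (hd _).hasFDerivAt.comp_hasDerivAt t (hcder t)
  have hconv' : ConvexOn ℝ Set.univ (fun t : ℝ => f (t • (y - x) + x)) := by
    have h := hconv.comp_affineMap (AffineMap.lineMap x y : ℝ →ᵃ[ℝ] E)
    simpa [Function.comp_def, AffineMap.lineMap_apply] using h
  have hs := hconv'.le_slope_of_hasDerivAt (Set.mem_univ (0:ℝ)) (Set.mem_univ (1:ℝ))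
    one_pos (hg 0)
  rw [slope_def_field] at hs
  simp only [zero_smul, zero_add, one_smul, sub_add_cancel, sub_zero, div_one] at hs
  rw [grad_inner_eq]
  linarith

end Aux

set_option maxHeartbeats 1000000 in
theorem lower_bound_convex_L0L1_smooth {d : ℕ}
    (f : EuclideanSpace ℝ (Fin d) → ℝ) (L₀ L₁ : ℝ)
    (hL₀ : 0 ≤ L₀) (hL₁ : 0 < L₁)
    (hf : ContDiff ℝ 2 f)
    (hconv : ConvexOn ℝ Set.univ f)
    (hsmooth : ∀ x, ‖iteratedFDeriv ℝ 2 f x‖ ≤ L₀ + L₁ * ‖gradient f x‖)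
    (hpos : ∀ x, 0 < L₀ + L₁ * ‖gradient f x‖) :
    ∀ x y, f y ≥ f x + ⟪gradient f x, y - x⟫ +
      (L₀ + L₁ * ‖gradient f y‖) / L₁ ^ 2 *
        ((1 + L₁ * ‖gradient f y - gradient f x‖ / (L₀ + L₁ * ‖gradient f y‖)) *
           Real.log (1 + L₁ * ‖gradient f y - gradient f x‖ / (L₀ + L₁ * ‖gradient f y‖)) -
         L₁ * ‖gradient f y - gradient f x‖ / (L₀ + L₁ * ‖gradient f y‖)) := by
  intro x y
  have hdiff : Differentiable ℝ f := hf.differentiable two_ne_zero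
  set G := gradient f with hGdef
  set a := L₀ + L₁ * ‖G y‖ with ha
  have ha0 : 0 < a := hpos y
  set Gn := ‖G y - G x‖ with hGn
  have hGn0 : 0 ≤ Gn := norm_nonneg _
  set γ := L₁ * Gn / a with hγ
  have hγ0 : 0 ≤ γ := by positivity
  rcases eq_or_lt_of_le hGn0 with h0 | hGnpos
  · -- degenerate case: gradients equal
    have hγz : γ = 0 := by rw [hγ, ← h0]; ring_nf
    rw [hγz]
    have := convex_first_order f hdiff hconv x y
    have hz : ((1:ℝ) + 0) * Real.log (1 + 0) - 0 = 0 := by norm_num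
    rw [hz, mul_zero, add_zero]
    exact this
  · -- main case
    -- derivative of the gradient
    have h1 : ContDiff ℝ 1 (fderiv ℝ f) := hf.fderiv_right (by norm_num)
    set B := fderiv ℝ (fderiv ℝ f) with hB
    have hBcont : Continuous B := h1.continuous_fderiv one_ne_zero
    let ιL : (StrongDual ℝ (EuclideanSpace ℝ (Fin d))) →L[ℝ] EuclideanSpace ℝ (Fin d) :=
      ((InnerProductSpace.toDual ℝ (EuclideanSpace ℝ (Fin d))).symm.toContinuousLinearEquiv :
        _ ≃L[ℝ] _).toContinuousLinearMap
    have hιL : ∀ l, ‖ιL l‖ = ‖l‖ := fun l =>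
      (InnerProductSpace.toDual ℝ (EuclideanSpace ℝ (Fin d))).symm.norm_map l
    have hGeq : G = fun w => ιL (fderiv ℝ f w) := rfl
    set D : EuclideanSpace ℝ (Fin d) →
        (EuclideanSpace ℝ (Fin d) →L[ℝ] EuclideanSpace ℝ (Fin d)) :=
      fun z => ιL.comp (B z) with hD
    have hDG : ∀ z, HasFDerivAt G (D z) z := by
      intro z
      have hBz : HasFDerivAt (fderiv ℝ f) (B z) z :=
        ((h1.differentiable one_ne_zero) z).hasFDerivAt
      exact ιL.hasFDerivAt.comp z hBz
    have hBle : ∀ z, ‖B z‖ ≤ ‖iteratedFDeriv ℝ 2 f z‖ := by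
      intro z
      refine ContinuousLinearMap.opNorm_le_bound _ (norm_nonneg _) (fun u => ?_)
      refine ContinuousLinearMap.opNorm_le_bound _ (by positivity) (fun w => ?_)
      have h2 : B z u w = iteratedFDeriv ℝ 2 f z ![u, w] := by
        rw [iteratedFDeriv_two_apply]; simp; rfl
      have h3 := (iteratedFDeriv ℝ 2 f z).le_opNorm ![u, w]
      rw [h2]
      calc ‖iteratedFDeriv ℝ 2 f z ![u, w]‖ ≤ ‖iteratedFDeriv ℝ 2 f z‖ * (‖u‖ * ‖w‖) := by
            simpa [Fin.prod_univ_two, mul_assoc] using h3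
        _ = ‖iteratedFDeriv ℝ 2 f z‖ * ‖u‖ * ‖w‖ := by ring
    have hDle : ∀ z, ‖D z‖ ≤ L₀ + L₁ * ‖G z‖ := by
      intro z
      have h4 : ‖D z‖ ≤ ‖B z‖ := by
        refine ContinuousLinearMap.opNorm_le_bound _ (by positivity) (fun u => ?_)
        have : ‖ιL (B z u)‖ = ‖B z u‖ := hιL _
        rw [ContinuousLinearMap.comp_apply, this]
        exact (B z).le_opNorm u
      exact h4.trans ((hBle z).trans (hsmooth z))
    -- setup of the direction and time
    set v : EuclideanSpace ℝ (Fin d) := Gn⁻¹ • (G y - G x) with hv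
    have hvn : ‖v‖ = 1 := by
      rw [hv, norm_smul, norm_inv, Real.norm_eq_abs, abs_of_pos hGnpos, ← hGn]
      field_simp
    set T := L₁⁻¹ * Real.log (1 + γ) with hT
    have h1γ : (0:ℝ) < 1 + γ := by linarith
    have hT0 : 0 ≤ T := mul_nonneg (inv_nonneg.2 hL₁.le) (Real.log_nonneg (by linarith))
    have hexpT : Real.exp (L₁ * T) = 1 + γ := by
      rw [hT, ← mul_assoc, mul_inv_cancel₀ hL₁.ne', one_mul, Real.exp_log h1γ]
    set c : ℝ → EuclideanSpace ℝ (Fin d) := fun s => y - s • v with hc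
    have hccont : Continuous c := by
      apply continuous_const.sub (continuous_id.smul continuous_const)
    have hcder : ∀ s : ℝ, HasDerivAt c (-v) s := fun s => by
      simpa using ((hasDerivAt_id s).smul_const v).const_sub y
    have hc0 : c 0 = y := by simp [hc]
    have hGcont : Continuous G := by
      rw [hGeq]
      exact ιL.continuous.comp (hf.continuous_fderiv two_ne_zero)
    have hgder : ∀ s : ℝ, HasDerivAt (fun t => G (c t)) ((D (c s)) (-v)) s :=
      fun s => (hDG (c s)).comp_hasDerivAt s (hcder s)
    -- Gronwall estimate
    have hgron : ∀ s ∈ Set.Icc (0:ℝ) T, ‖G (c s) - G y‖ ≤ a / L₁ * (Real.exp (L₁ * s) - 1) := by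
      have key := norm_le_gronwallBound_of_norm_deriv_right_le
        (f := fun s => G (c s) - G y) (f' := fun s => (D (c s)) (-v))
        (δ := 0) (K := L₁) (ε := a) (a := 0) (b := T)
        (((hGcont.comp hccont).sub continuous_const).continuousOn)
        (fun s _ => (((hgder s).sub_const (G y)).hasDerivWithinAt))
        (by simp [hc0]) ?_
      · intro s hs
        have := key s hs
        rw [gronwallBound_of_K_ne_0 hL₁.ne'] at this
        simpa using this
      · intro s _
        have h5 : ‖(D (c s)) (-v)‖ ≤ ‖D (c s)‖ := by
          have := (D (c s)).le_opNorm (-v)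
          rwa [norm_neg, hvn, mul_one] at this
        have h6 : ‖G (c s)‖ ≤ ‖G (c s) - G y‖ + ‖G y‖ := by
          simpa using norm_add_le (G (c s) - G y) (G y)
        have h7 := mul_le_mul_of_nonneg_left h6 hL₁.le
        have h8 := h5.trans (hDle (c s))
        rw [ha]
        linarith
    -- inner product lower bound
    have hinner : ∀ s ∈ Set.Icc (0:ℝ) T,
        Gn - a / L₁ * (Real.exp (L₁ * s) - 1) ≤ ⟪G (c s) - G x, v⟫ := by
      intro s hs
      have e1 : ⟪G (c s) - G x, v⟫ = ⟪G y - G x, v⟫ + ⟪G (c s) - G y, v⟫ := by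
        rw [← inner_add_left]; congr 1; abel
      have e2 : ⟪G y - G x, v⟫ = Gn := by
        rw [hv, real_inner_smul_right, real_inner_self_eq_norm_sq, ← hGn, pow_two,
          ← mul_assoc, inv_mul_cancel₀ hGnpos.ne', one_mul]
      have e3 : |⟪G (c s) - G y, v⟫| ≤ ‖G (c s) - G y‖ := by
        have := abs_real_inner_le_norm (G (c s) - G y) v
        rwa [hvn, mul_one] at this
      have := hgron s hs
      have := (abs_le.mp e3).1
      rw [e1, e2]
      linarith
    -- FTC for f along the segment
    set q : ℝ → ℝ := fun s => ⟪G (c s) - G x, v⟫ with hq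
    have hqcont : Continuous q :=
      ((hGcont.comp hccont).sub continuous_const).inner continuous_const
    have hfc' : ∀ s : ℝ, HasDerivAt (fun t => f (c t)) (-q s - ⟪G x, v⟫) s := by
      intro s
      have h := (hdiff (c s)).hasFDerivAt.comp_hasDerivAt s (hcder s)
      refine h.congr_deriv ?_
      rw [map_neg, ← grad_inner_eq]
      simp only [hq, inner_sub_left]
      ring
    have hFTC : ∫ s in (0:ℝ)..T, (-q s - ⟪G x, v⟫) = f (c T) - f (c 0) :=
      intervalIntegral.integral_eq_sub_of_hasDerivAt (fun s _ => hfc' s)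
        (((hqcont.neg).sub continuous_const).intervalIntegrable 0 T)
    have hsplit : ∫ s in (0:ℝ)..T, (-q s - ⟪G x, v⟫)
        = -(∫ s in (0:ℝ)..T, q s) - T * ⟪G x, v⟫ := by
      rw [intervalIntegral.integral_sub (f := fun s => -q s) (hqcont.neg.intervalIntegrable 0 T)
        (intervalIntegrable_const), intervalIntegral.integral_neg,
        intervalIntegral.integral_const]
      simp
    -- integral comparison
    have hlowcont : Continuous (fun s : ℝ => Gn - a / L₁ * (Real.exp (L₁ * s) - 1)) := by
      fun_prop
    have hlow : ∀ s : ℝ, HasDerivAt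
        (fun r => (Gn + a / L₁) * r - a / L₁ ^ 2 * Real.exp (L₁ * r))
        (Gn - a / L₁ * (Real.exp (L₁ * s) - 1)) s := by
      intro s
      have hexp : HasDerivAt (fun r : ℝ => Real.exp (L₁ * r)) (Real.exp (L₁ * s) * L₁) s := by
        simpa [mul_comm] using (((hasDerivAt_id s).const_mul L₁).exp)
      have h7 := (((hasDerivAt_id s).const_mul (Gn + a / L₁)).sub
        (hexp.const_mul (a / L₁ ^ 2)))
      refine h7.congr_deriv ?_
      field_simp
      ring
    have hlowint : ∫ s in (0:ℝ)..T, (Gn - a / L₁ * (Real.exp (L₁ * s) - 1))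
        = (Gn + a / L₁) * T - a / L₁ ^ 2 * Real.exp (L₁ * T) + a / L₁ ^ 2 := by
      rw [intervalIntegral.integral_eq_sub_of_hasDerivAt (fun s _ => hlow s)
        (hlowcont.intervalIntegrable 0 T)]
      simp only [mul_zero, Real.exp_zero, mul_one]
      ring
    have hmono : ∫ s in (0:ℝ)..T, (Gn - a / L₁ * (Real.exp (L₁ * s) - 1))
        ≤ ∫ s in (0:ℝ)..T, q s := by
      refine intervalIntegral.integral_mono_on hT0
        (hlowcont.intervalIntegrable 0 T)
        (hqcont.intervalIntegrable 0 T) hinner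
    -- convexity at c T
    have hconvT : f x + ⟪G x, c T - x⟫ ≤ f (c T) := convex_first_order f hdiff hconv x (c T)
    have hyT : ⟪G x, y - x⟫ = ⟪G x, c T - x⟫ + T * ⟪G x, v⟫ := by
      simp only [hc, inner_sub_right, real_inner_smul_right]
      ring
    have hIval : (Gn + a / L₁) * T - a / L₁ ^ 2 * Real.exp (L₁ * T) + a / L₁ ^ 2
        = a / L₁ ^ 2 * ((1 + γ) * Real.log (1 + γ) - γ) := by
      rw [hexpT]
      have hGn' : Gn = γ * a / L₁ := by rw [hγ]; field_simp
      rw [hT, hGn']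
      field_simp
      ring
    rw [ge_iff_le, hyT]
    have hq0 : ∫ s in (0:ℝ)..T, q s = f (c 0) - f (c T) - T * ⟪G x, v⟫ := by
      rw [hsplit] at hFTC
      linarith
    rw [hc0] at hq0
    linarith [hmono, hlowint, hIval, hconvT, hq0]
end

section
/- Let f: ℝ^d → ℝ be convex, twice continuously differentiable, and (L₀, L₁)-smooth with L₁ > 0 and L₀ + L₁‖∇f(x)‖ > 0 everywhere. Then for all x, y: f(y) ≥ f(x) + ⟨∇f(x), y - x⟩ + ‖∇f(y) - ∇f(x)‖² / (2(L₀ + L₁‖∇f(y)‖) + L₁‖∇f(y) - ∇f(x)‖). -/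
open RealInnerProductSpace Set

section Aux

variable {E : Type*} [NormedAddCommGroup E] [InnerProductSpace ℝ E] [CompleteSpace E]

lemma aux_fderiv_inner (f : E → ℝ) (z v : E) :
    fderiv ℝ f z v = ⟪gradient f z, v⟫ := by
  rw [gradient, InnerProductSpace.toDual_symm_apply]

omit [CompleteSpace E] in
lemma aux_norm_fderiv_fderiv (f : E → ℝ) (z : E) :
    ‖fderiv ℝ (fderiv ℝ f) z‖ = ‖iteratedFDeriv ℝ 2 f z‖ := by
  have h1 : ‖iteratedFDeriv ℝ 0 (fderiv ℝ (fderiv ℝ f)) z‖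
      = ‖iteratedFDeriv ℝ 2 f z‖ := by
    rw [norm_iteratedFDeriv_fderiv, norm_iteratedFDeriv_fderiv]
  simpa [norm_iteratedFDeriv_zero] using h1

lemma aux_gradient_eq (f : E → ℝ) :
    gradient f = (⇑(InnerProductSpace.toDual ℝ E).symm) ∘ (fderiv ℝ f) := rfl

lemma aux_norm_fderiv_gradient (f : E → ℝ) (z : E) :
    ‖fderiv ℝ (gradient f) z‖ = ‖iteratedFDeriv ℝ 2 f z‖ := by
  rw [aux_gradient_eq, LinearIsometryEquiv.comp_fderiv, ← aux_norm_fderiv_fderiv]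
  exact
    (InnerProductSpace.toDual ℝ E).symm.toLinearIsometry.norm_toContinuousLinearMap_comp
      (g := fderiv ℝ (fderiv ℝ f) z)

/-- first-order condition for convexity -/
lemma aux_convex_first_order (f : E → ℝ) (hconv : ConvexOn ℝ Set.univ f)
    (hdiff : Differentiable ℝ f) (a b : E) :
    f a + ⟪gradient f a, b - a⟫ ≤ f b := by
  set q : ℝ → ℝ := fun s => f (a + s • (b - a)) with hq
  have hc : ∀ s : ℝ, HasDerivAt (fun u : ℝ => a + u • (b - a)) (b - a) s := by
    intro s
    simpa using ((hasDerivAt_id s).smul_const (b - a)).const_add a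
  have hq0 : HasDerivAt q ⟪gradient f a, b - a⟫ 0 := by
    have := ((hdiff (a + (0:ℝ) • (b - a))).hasFDerivAt.comp_hasDerivAt 0 (hc 0))
    simp only [zero_smul, add_zero] at this
    rw [aux_fderiv_inner] at this
    exact this
  have hqconv : ConvexOn ℝ Set.univ q := by
    have h := hconv.comp_affineMap (AffineMap.lineMap a b : ℝ →ᵃ[ℝ] E)
    rw [Set.preimage_univ] at h
    have : q = f ∘ (AffineMap.lineMap a b : ℝ →ᵃ[ℝ] E) := by
      funext s
      simp [hq, AffineMap.lineMap_apply, add_comm]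
    rwa [this]
  have hslope := hqconv.le_slope_of_hasDerivAt (mem_univ 0) (mem_univ 1)
    one_pos hq0
  have hs : slope q 0 1 = q 1 - q 0 := by simp [slope_def_field]
  rw [hs] at hslope
  have h0 : q 0 = f a := by simp [hq]
  have h1 : q 1 = f b := by simp [hq]
  rw [h0, h1] at hslope
  linarith

lemma aux_num {a b : ℝ} (ha : 0 < a) (hb : 0 < b) :
    1 / (2*a + b) ≤ 1/(a+b) - a/(2*(a+b)^2) - (2/9)*a*b/((a+b)^3) := by
  have h1 : (0:ℝ) < a + b := by linarith
  have h2 : (0:ℝ) < 2*a + b := by linarith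
  rw [div_sub_div _ _ (by positivity) (by positivity), div_sub_div _ _ (by positivity)
    (by positivity), div_le_div_iff₀ (by positivity) (by positivity)]
  nlinarith [mul_pos (mul_pos ha ha) hb, mul_pos (mul_pos ha hb) hb, sq_nonneg (a+b),
    mul_pos h1 h1, mul_pos (mul_pos h1 h1) h1, mul_pos ha hb]

end Aux

set_option maxHeartbeats 1000000 in
theorem simple_lower_bound_convex_L0L1_smooth {d : ℕ}
    (f : EuclideanSpace ℝ (Fin d) → ℝ) (L₀ L₁ : ℝ)
    (hL₀ : 0 ≤ L₀) (hL₁ : 0 < L₁)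
    (hf : ContDiff ℝ 2 f)
    (hconv : ConvexOn ℝ Set.univ f)
    (hsmooth : ∀ x, ‖iteratedFDeriv ℝ 2 f x‖ ≤ L₀ + L₁ * ‖gradient f x‖)
    (hpos : ∀ x, 0 < L₀ + L₁ * ‖gradient f x‖) :
    ∀ x y, f y ≥ f x + ⟪gradient f x, y - x⟫ +
      ‖gradient f y - gradient f x‖ ^ 2 /
        (2 * (L₀ + L₁ * ‖gradient f y‖) + L₁ * ‖gradient f y - gradient f x‖) := by
  intro x y
  have hdiff : Differentiable ℝ f := hf.differentiable two_ne_zero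
  have hd1 : Differentiable ℝ (fderiv ℝ f) :=
    (hf.fderiv_right (m := 1) (by norm_num)).differentiable one_ne_zero
  have hdg : Differentiable ℝ (gradient f) := by
    rw [aux_gradient_eq]
    exact (InnerProductSpace.toDual ℝ _).symm.differentiable.comp hd1
  rw [ge_iff_le]
  set gx := gradient f x with hgx
  set gy := gradient f y with hgy
  by_cases hg0 : gy - gx = 0
  · rw [hg0]
    simpa [hgx] using aux_convex_first_order f hconv hdiff x y
  · set g := gy - gx with hg
    have hgn : 0 < ‖g‖ := norm_pos_iff.mpr hg0
    set A := L₀ + L₁ * ‖gy‖ with hA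
    have hA0 : 0 < A := hpos y
    set B := L₁ * ‖g‖ with hB
    have hB0 : 0 < B := mul_pos hL₁ hgn
    have hAB : 0 < A + B := by linarith
    set t := 1 / (A + B) with ht
    have ht0 : 0 < t := by positivity
    set v := -(t • g) with hv
    have hvnorm : ‖v‖ = t * ‖g‖ := by
      rw [hv, norm_neg, norm_smul, Real.norm_eq_abs, abs_of_pos ht0]
    have hvn0 : 0 < ‖v‖ := by rw [hvnorm]; positivity
    set c := L₁ * ‖v‖ with hc
    have hc0 : 0 < c := mul_pos hL₁ hvn0
    have hcBt : c = B * t := by rw [hc, hvnorm, hB]; ring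
    have hc1 : c < 1 := by
      rw [hcBt, ht]
      rw [mul_one_div, div_lt_one hAB]
      linarith
    -- the curve
    set γ : ℝ → EuclideanSpace ℝ (Fin d) := fun s => y + s • v with hγ
    have hγd : ∀ s : ℝ, HasDerivAt γ v s := fun s => by
      simpa [hγ] using ((hasDerivAt_id s).smul_const v).const_add y
    have hγ0 : γ 0 = y := by simp [hγ]
    -- Gronwall bound for the gradient along the curve
    set F : ℝ → EuclideanSpace ℝ (Fin d) := fun s => gradient f (γ s) - gy with hF
    have hFd : ∀ s : ℝ, HasDerivAt F (fderiv ℝ (gradient f) (γ s) v) s := fun s =>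
      ((hdg (γ s)).hasFDerivAt.comp_hasDerivAt s (hγd s)).sub_const gy
  
    have hFbound : ∀ s : ℝ, ‖fderiv ℝ (gradient f) (γ s) v‖ ≤ c * ‖F s‖ + A * ‖v‖ := by
      intro s
      have h1 : ‖fderiv ℝ (gradient f) (γ s) v‖ ≤ ‖iteratedFDeriv ℝ 2 f (γ s)‖ * ‖v‖ := by
        calc ‖fderiv ℝ (gradient f) (γ s) v‖ ≤ ‖fderiv ℝ (gradient f) (γ s)‖ * ‖v‖ :=
              ContinuousLinearMap.le_opNorm _ _
          _ = _ := by rw [aux_norm_fderiv_gradient]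
      have h2 : ‖iteratedFDeriv ℝ 2 f (γ s)‖ ≤ L₀ + L₁ * ‖gradient f (γ s)‖ := hsmooth _
      have h3 : ‖gradient f (γ s)‖ ≤ ‖gy‖ + ‖F s‖ := by
        rw [hF]
        exact norm_le_insert' _ _
      have h4 : ‖iteratedFDeriv ℝ 2 f (γ s)‖ * ‖v‖ ≤ (L₀ + L₁ * (‖gy‖ + ‖F s‖)) * ‖v‖ := by
        apply mul_le_mul_of_nonneg_right _ hvn0.le
        calc ‖iteratedFDeriv ℝ 2 f (γ s)‖ ≤ L₀ + L₁ * ‖gradient f (γ s)‖ := h2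
          _ ≤ L₀ + L₁ * (‖gy‖ + ‖F s‖) := by nlinarith
      calc ‖fderiv ℝ (gradient f) (γ s) v‖ ≤ (L₀ + L₁ * (‖gy‖ + ‖F s‖)) * ‖v‖ :=
            h1.trans h4
        _ = c * ‖F s‖ + A * ‖v‖ := by rw [hc, hA]; ring
    have hgron : ∀ s ∈ Icc (0:ℝ) 1, ‖F s‖ ≤ A / L₁ * (Real.exp (c * s) - 1) := by
      intro s hs
      have hcont : ContinuousOn F (Icc 0 1) :=
        (Differentiable.continuous (fun r => (hFd r).differentiableAt)).continuousOn
      have h := norm_le_gronwallBound_of_norm_deriv_right_le (δ := 0) (K := c)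
        (ε := A * ‖v‖) hcont
        (fun r _ => (hFd r).hasDerivWithinAt)
        (by simp [hF, hγ0, hgy])
        (fun r _ => hFbound r) s hs
      rw [gronwallBound_of_K_ne_0 hc0.ne'] at h
      have he : A * ‖v‖ / c = A / L₁ := by
        rw [hc]; field_simp
      simpa [he, sub_zero] using h
    -- descent inequality via antitone auxiliary function
    set P := (⟪gy, v⟫ : ℝ) with hP
    set R : ℝ → ℝ := fun s => A / L₁^2 * (Real.exp (c*s) - 1 - c*s) with hR
    set h : ℝ → ℝ := fun s => f (γ s) - s * P - R s with hh
    have hhd : ∀ s : ℝ, HasDerivAt h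
        (⟪gradient f (γ s), v⟫ - P - A / L₁^2 * (c * Real.exp (c*s) - c)) s := by
      intro s
      have h1 : HasDerivAt (fun s => f (γ s)) ⟪gradient f (γ s), v⟫ s := by
        have := (hdiff (γ s)).hasFDerivAt.comp_hasDerivAt s (hγd s)
        rw [aux_fderiv_inner] at this
        exact this
      have h2 : HasDerivAt (fun s : ℝ => s * P) P s := by
        simpa using (hasDerivAt_id s).mul_const P
      have h5 : HasDerivAt (fun s : ℝ => c * s) c s := by
        simpa using (hasDerivAt_id s).const_mul c
      have h3 : HasDerivAt (fun s : ℝ => Real.exp (c*s)) (c * Real.exp (c*s)) s := by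
        simpa [mul_comm] using h5.exp
      have h4 : HasDerivAt R (A / L₁^2 * (c * Real.exp (c*s) - c)) s := by
        have := ((h3.sub_const 1).sub h5).const_mul (A / L₁^2)
        exact this
      exact (h1.sub h2).sub h4
    have hanti : AntitoneOn h (Icc 0 1) := by
      apply antitoneOn_of_deriv_nonpos (convex_Icc 0 1)
      · exact (Differentiable.continuous fun s => (hhd s).differentiableAt).continuousOn
      · exact fun s _ => ((hhd s).differentiableAt).differentiableWithinAt
      · intro s hs
        rw [interior_Icc] at hs
        rw [(hhd s).deriv]
        have hmem : s ∈ Icc (0:ℝ) 1 := Ioo_subset_Icc_self hs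
        have hCS : ⟪gradient f (γ s), v⟫ - P ≤ ‖F s‖ * ‖v‖ := by
          have he : ⟪gradient f (γ s), v⟫ - P = ⟪F s, v⟫ := by
            rw [hP, hF, inner_sub_left]
          rw [he]
          exact real_inner_le_norm _ _
        have hb := hgron s hmem
        have hexp0 : (0:ℝ) ≤ Real.exp (c*s) - 1 := by
          have : (1:ℝ) ≤ Real.exp (c*s) := Real.one_le_exp (mul_nonneg hc0.le hs.1.le)
          linarith
        have hkey : ‖F s‖ * ‖v‖ ≤ A / L₁^2 * (c * Real.exp (c*s) - c) := by
          have he2 : A / L₁^2 * (c * Real.exp (c*s) - c) = A / L₁ * (Real.exp (c*s) - 1) * ‖v‖ := by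
            rw [hc]; field_simp; try ring
          rw [he2]
          exact mul_le_mul_of_nonneg_right hb hvn0.le
        linarith
    have hkey : h 1 ≤ h 0 :=
      hanti (Set.mem_Icc.mpr ⟨le_refl 0, zero_le_one⟩)
        (Set.mem_Icc.mpr ⟨zero_le_one, le_refl 1⟩) zero_le_one
    have hdesc : f (y + v) ≤ f y + P + A/L₁^2 * (Real.exp c - 1 - c) := by
      have e1 : γ 1 = y + v := by simp [hγ]
      have e0 : R 0 = 0 := by simp [hR]
      have e1' : R 1 = A/L₁^2 * (Real.exp c - 1 - c) := by simp [hR]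
      have hh1 : h 1 = f (y + v) - P - A/L₁^2 * (Real.exp c - 1 - c) := by
        rw [hh]; simp only [e1, e1']; try ring
      have hh0 : h 0 = f y := by
        rw [hh]; simp only [hγ0, e0]; try ring
      rw [hh1, hh0] at hkey
      linarith
    -- convexity
    have hcvx := aux_convex_first_order f hconv hdiff x (y + v)
    have hsplit : (⟪gx, (y + v) - x⟫ : ℝ) = ⟪gx, y - x⟫ + ⟪gx, v⟫ := by
      have he : (y + v) - x = (y - x) + v := by abel
      rw [he, inner_add_right]
    have hginner : P - ⟪gx, v⟫ = -(t * ‖g‖^2) := by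
      rw [hP, ← inner_sub_left, ← hg, hv, inner_neg_right, real_inner_smul_right,
        real_inner_self_eq_norm_sq]
      try ring
    -- final numeric
    have hexp3 : Real.exp c ≤ 1 + c + c^2/2 + 2/9*c^3 := by
      have hb := Real.exp_bound (x := c) (by rw [abs_of_pos hc0]; exact hc1.le)
        (n := 3) (by norm_num)
      have hsum : ∑ m ∈ Finset.range 3, c^m / (Nat.factorial m : ℝ) = 1 + c + c^2/2 := by
        simp [Finset.sum_range_succ, Nat.factorial]
        try ring
      rw [hsum, abs_of_pos hc0] at hb
      have h2 := (abs_le.mp hb).2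
      norm_num [Nat.factorial] at h2 ⊢
      nlinarith [h2]
    have hnum : ‖g‖^2 / (2*A + B) ≤ t * ‖g‖^2 - A/L₁^2 * (Real.exp c - 1 - c) := by
      have hRem : A/L₁^2 * (Real.exp c - 1 - c) ≤ ‖g‖^2 * (A*t^2/2 + (2/9)*A*B*t^3) := by
        have h1 : A/L₁^2 * (Real.exp c - 1 - c) ≤ A/L₁^2 * (c^2/2 + 2/9*c^3) := by
          apply mul_le_mul_of_nonneg_left _ (by positivity)
          linarith
        have h2 : A/L₁^2 * (c^2/2 + 2/9*c^3) = ‖g‖^2 * (A*t^2/2 + (2/9)*A*B*t^3) := by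
          rw [hcBt, hB]
          field_simp
        linarith
      have hpoly : 1 / (2*A + B) ≤ t - A*t^2/2 - (2/9)*A*B*t^3 := by
        have := aux_num hA0 hB0
        rw [ht]
        calc 1 / (2*A + B) ≤ 1/(A+B) - A/(2*(A+B)^2) - (2/9)*A*B/((A+B)^3) := this
          _ = 1/(A+B) - A*(1/(A+B))^2/2 - (2/9)*A*B*(1/(A+B))^3 := by
            field_simp
      have hg2 : (0:ℝ) < ‖g‖^2 := by positivity
      calc ‖g‖^2 / (2*A + B) = ‖g‖^2 * (1/(2*A+B)) := by ring
        _ ≤ ‖g‖^2 * (t - A*t^2/2 - (2/9)*A*B*t^3) := by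
            exact mul_le_mul_of_nonneg_left hpoly hg2.le
        _ ≤ t * ‖g‖^2 - A/L₁^2 * (Real.exp c - 1 - c) := by nlinarith [hRem]
    -- combine everything
    calc f x + ⟪gx, y - x⟫ + ‖g‖^2 / (2*A + B)
        ≤ f x + ⟪gx, y - x⟫ + (t * ‖g‖^2 - A/L₁^2 * (Real.exp c - 1 - c)) := by linarith
      _ ≤ f y := by
          have := hcvx
          rw [hsplit] at this
          nlinarith [hdesc, hginner]
end

section
/- For p > 2 and L₁ > 0, the function f(x) = (1/p)‖x‖^p on ℝ^d satisfies ‖∇²f(x)‖ ≤ L₀ + L₁‖∇f(x)‖ for all x, with L₀ = ((p-2)/L₁)^{p-2}. -/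
open Real Filter Asymptotics Topology

set_option maxHeartbeats 1000000
set_option synthInstance.maxHeartbeats 400000

section aux

variable {E : Type*} [NormedAddCommGroup E] [InnerProductSpace ℝ E]

private lemma key_scalar {p L₁ : ℝ} (hp : 2 < p) (hL₁ : 0 < L₁) {t : ℝ} (ht : 0 ≤ t) :
    (p - 1) * t ^ (p - 2) ≤ ((p - 2) / L₁) ^ (p - 2) + L₁ * t ^ (p - 1) := by
  have hp2 : (0:ℝ) < p - 2 := by linarith
  have hp1 : (0:ℝ) < p - 1 := by linarith
  set a : ℝ := (p - 2) / L₁ with ha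
  have hapos : 0 < a := div_pos hp2 hL₁
  rcases ht.eq_or_lt with rfl | htpos
  · rw [zero_rpow hp2.ne', zero_rpow (by linarith : p - 1 ≠ 0)]
    have : 0 ≤ a ^ (p - 2) := rpow_nonneg hapos.le _
    nlinarith
  · set w₁ : ℝ := (p - 2) / (p - 1) with hw₁
    set w₂ : ℝ := 1 / (p - 1) with hw₂
    set A : ℝ := t ^ (p - 1) * (p - 1) / a with hA
    set B : ℝ := a ^ (p - 2) * (p - 1) with hB
    have hApos : 0 < A := by positivity
    have hBpos : 0 < B := by positivity
    have hsum : w₁ + w₂ = 1 := by rw [hw₁, hw₂]; field_simp; ring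
    have key := Real.geom_mean_le_arith_mean2_weighted (by positivity) (by positivity)
      hApos.le hBpos.le hsum
    have hgm : A ^ w₁ * B ^ w₂ = (p - 1) * t ^ (p - 2) := by
      rw [rpow_def_of_pos hApos, rpow_def_of_pos hBpos, ← exp_add]
      have h1 : (p - 1) * t ^ (p - 2) = exp (log (p - 1) + log t * (p - 2)) := by
        rw [exp_add, ← rpow_def_of_pos htpos, exp_log hp1]
      rw [h1]
      congr 1
      have hlA : log A = log t * (p - 1) + log (p - 1) - log a := by
        rw [hA, log_div (by positivity) hapos.ne', log_mul (by positivity) hp1.ne',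
          log_rpow htpos]; ring
      have hlB : log B = log a * (p - 2) + log (p - 1) := by
        rw [hB, log_mul (by positivity) hp1.ne', log_rpow hapos]; ring
      rw [hlA, hlB, hw₁, hw₂]
      field_simp
      ring
    have harith : w₁ * A + w₂ * B = L₁ * t ^ (p - 1) + a ^ (p - 2) := by
      rw [hw₁, hw₂, hA, hB, ha]
      field_simp
    rw [hgm, harith] at key
    linarith

private noncomputable def J (E : Type*) [NormedAddCommGroup E] [InnerProductSpace ℝ E] :
    E →L[ℝ] E →L[ℝ] ℝ := innerSL ℝ

private lemma normJ_le : ‖J E‖ ≤ 1 :=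
  ContinuousLinearMap.opNorm_le_bound _ zero_le_one fun y => by
    rw [one_mul]
    show ‖innerSL ℝ y‖ ≤ ‖y‖
    rw [innerSL_apply_norm]

private lemma hasFDerivAt_f (p : ℝ) (hp : 2 < p) (x : E) :
    HasFDerivAt (fun z : E => (1 / p) * ‖z‖ ^ p) ((‖x‖ ^ (p - 2)) • innerSL ℝ x) x := by
  have h := (hasFDerivAt_norm_rpow x (by linarith : 1 < p)).const_mul (1 / p)
  refine h.congr_fderiv ?_
  rw [smul_smul]
  congr 1
  field_simp

private lemma rw_pow_sq (p : ℝ) (y : E) :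
    ((‖y‖ : ℝ) ^ (2:ℕ)) ^ ((p - 2) / 2) = ‖y‖ ^ (p - 2) := by
  rw [← Real.rpow_natCast ‖y‖ 2, ← Real.rpow_mul (norm_nonneg y),
    show ((2:ℕ):ℝ) * ((p - 2) / 2) = p - 2 by push_cast; ring]

private lemma hasFDerivAt_F_ne (p : ℝ) (hp : 2 < p) (x : E) (hx : x ≠ 0) :
    HasFDerivAt (fun y : E => (‖y‖ ^ (p - 2)) • innerSL ℝ y)
      ((‖x‖ ^ (p - 2)) • J E +
        (((p - 2) / 2 * (‖x‖ ^ (2:ℕ)) ^ ((p - 2) / 2 - 1)) •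
            (2 • innerSL ℝ x)).smulRight (innerSL ℝ x)) x := by
  have hn : (0:ℝ) < ‖x‖ := norm_pos_iff.mpr hx
  have hg : HasFDerivAt (fun y : E => ‖y‖ ^ (p - 2))
      (((p - 2) / 2 * (‖x‖ ^ (2:ℕ)) ^ ((p - 2) / 2 - 1)) • (2 • innerSL ℝ x)) x := by
    have hsq : HasFDerivAt (fun y : E => (‖y‖ : ℝ) ^ (2:ℕ)) (2 • innerSL ℝ x) x :=
      (hasStrictFDerivAt_norm_sq x).hasFDerivAt
    have h2 := hsq.rpow_const (p := (p - 2) / 2) (Or.inl (by positivity))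
    have e1 : (fun y : E => ((‖y‖ : ℝ) ^ (2:ℕ)) ^ ((p - 2) / 2)) =
        fun y : E => ‖y‖ ^ (p - 2) := funext fun y => rw_pow_sq p y
    rw [e1] at h2
    exact h2
  have hc : HasFDerivAt (fun y : E => innerSL ℝ y) (J E) x := (J E).hasFDerivAt
  exact hg.smul hc

private lemma hasFDerivAt_F_zero (p : ℝ) (hp : 2 < p) :
    HasFDerivAt (fun y : E => (‖y‖ ^ (p - 2)) • innerSL ℝ y)
      (0 : E →L[ℝ] E →L[ℝ] ℝ) 0 := by
  rw [HasFDerivAt, hasFDerivAtFilter_iff_isLittleO]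
  rw [Asymptotics.isLittleO_iff]
  intro c hc
  have hcont : Tendsto (fun y : E => ‖y‖ ^ (p - 2)) (𝓝 0) (𝓝 0) := by
    have h1 : ContinuousAt (fun y : E => ‖y‖ ^ (p - 2)) 0 :=
      continuousAt_id.norm.rpow_const (Or.inr (by linarith))
    have h2 := h1.tendsto
    simpa [Real.zero_rpow (show p - 2 ≠ 0 by linarith)] using h2
  rw [Filter.prod_pure, Filter.eventually_map]
  filter_upwards [hcont.eventually_le_const hc] with y hy
  have h0 : (‖(0:E)‖ ^ (p - 2)) • innerSL ℝ (0:E) = (0 : E →L[ℝ] ℝ) := by simp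
  simp only [h0, sub_zero, ContinuousLinearMap.zero_apply]
  rw [norm_smul (‖y‖ ^ (p - 2)) (innerSL ℝ y), innerSL_apply_norm, Real.norm_eq_abs,
    abs_of_nonneg (rpow_nonneg (norm_nonneg y) _)]
  exact mul_le_mul_of_nonneg_right hy (norm_nonneg y)

private lemma norm_fderiv_F_le (p : ℝ) (hp : 2 < p) (x : E) :
    ‖fderiv ℝ (fun y : E => (‖y‖ ^ (p - 2)) • innerSL ℝ y) x‖ ≤ (p - 1) * ‖x‖ ^ (p - 2) := by
  by_cases hx : x = 0
  · subst hx
    rw [(hasFDerivAt_F_zero p hp).fderiv, norm_zero, ContinuousLinearMap.opNorm_zero,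
      Real.zero_rpow (show p - 2 ≠ 0 by linarith), mul_zero]
  · have hn : (0:ℝ) < ‖x‖ := norm_pos_iff.mpr hx
    rw [(hasFDerivAt_F_ne p hp x hx).fderiv]
    have h1 : ‖(‖x‖ ^ (p - 2)) • J E‖ ≤ ‖x‖ ^ (p - 2) := by
      refine le_trans (ContinuousLinearMap.opNorm_smul_le _ _) ?_
      rw [Real.norm_eq_abs, abs_of_nonneg (rpow_nonneg (norm_nonneg x) _)]
      calc ‖x‖ ^ (p - 2) * ‖J E‖
          ≤ ‖x‖ ^ (p - 2) * 1 :=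
            mul_le_mul_of_nonneg_left normJ_le (rpow_nonneg (norm_nonneg x) _)
        _ = ‖x‖ ^ (p - 2) := mul_one _
    have h2 : ‖(((p - 2) / 2 * (‖x‖ ^ (2:ℕ)) ^ ((p - 2) / 2 - 1)) •
            (2 • innerSL ℝ x)).smulRight (innerSL ℝ x)‖ ≤ (p - 2) * ‖x‖ ^ (p - 2) := by
      rw [ContinuousLinearMap.norm_smulRight_apply, innerSL_apply_norm,
        norm_smul ((p - 2) / 2 * (‖x‖ ^ (2:ℕ)) ^ ((p - 2) / 2 - 1)) ((2:ℕ) • innerSL ℝ x)]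
      have h3 : ‖(2 : ℕ) • innerSL ℝ (x : E)‖ = 2 * ‖x‖ := by
        rw [two_smul, show innerSL ℝ x + innerSL ℝ x = (2:ℝ) • innerSL ℝ x by module,
          norm_smul (2:ℝ) (innerSL ℝ x), innerSL_apply_norm]
        norm_num
      rw [h3, Real.norm_eq_abs, abs_of_nonneg (mul_nonneg (by linarith) (rpow_nonneg (by positivity) _))]
      have hA : (‖x‖ ^ (2:ℕ)) ^ ((p - 2) / 2 - 1) * ‖x‖ * ‖x‖ = ‖x‖ ^ (p - 2) := by
        rw [← Real.rpow_natCast ‖x‖ 2, ← Real.rpow_mul (norm_nonneg x),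
          show ((2:ℕ):ℝ) * ((p - 2) / 2 - 1) = p - 4 by push_cast; ring,
          ← Real.rpow_add_one hn.ne', ← Real.rpow_add_one hn.ne']
        congr 1
        ring
      rw [show (p - 2) / 2 * (‖x‖ ^ (2:ℕ)) ^ ((p - 2) / 2 - 1) * (2 * ‖x‖) * ‖x‖
          = (p - 2) * ((‖x‖ ^ (2:ℕ)) ^ ((p - 2) / 2 - 1) * ‖x‖ * ‖x‖) by ring, hA]
    calc ‖(‖x‖ ^ (p - 2)) • J E +
          (((p - 2) / 2 * (‖x‖ ^ (2:ℕ)) ^ ((p - 2) / 2 - 1)) •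
            (2 • innerSL ℝ x)).smulRight (innerSL ℝ x)‖
        ≤ ‖x‖ ^ (p - 2) + (p - 2) * ‖x‖ ^ (p - 2) := le_trans (ContinuousLinearMap.opNorm_add_le _ _) (add_le_add h1 h2)
      _ = (p - 1) * ‖x‖ ^ (p - 2) := by ring

end aux

theorem pow_norm_is_L0L1_smooth {d : ℕ} (p L₁ : ℝ) (hp : 2 < p) (hL₁ : 0 < L₁) :
    ∀ x : EuclideanSpace ℝ (Fin d),
      ‖iteratedFDeriv ℝ 2 (fun z : EuclideanSpace ℝ (Fin d) => (1 / p) * ‖z‖ ^ p) x‖ ≤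
        ((p - 2) / L₁) ^ (p - 2) +
          L₁ * ‖gradient (fun z : EuclideanSpace ℝ (Fin d) => (1 / p) * ‖z‖ ^ p) x‖ := by
  intro x
  set f : EuclideanSpace ℝ (Fin d) → ℝ := fun z => (1 / p) * ‖z‖ ^ p with hf
  have hfd : fderiv ℝ f = fun y : EuclideanSpace ℝ (Fin d) => (‖y‖ ^ (p - 2)) • innerSL ℝ y :=
    funext fun y => (hasFDerivAt_f p hp y).fderiv
  have hgrad : gradient f x = (‖x‖ ^ (p - 2)) • x := by
    refine HasGradientAt.gradient ?_
    rw [hasGradientAt_iff_hasFDerivAt]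
    have h := hasFDerivAt_f p hp x
    refine h.congr_fderiv ?_
    ext y
    simp [InnerProductSpace.toDual_apply_apply, inner_smul_left]
  have hgradnorm : ‖gradient f x‖ = ‖x‖ ^ (p - 1) := by
    rw [hgrad, norm_smul (‖x‖ ^ (p - 2)) x, Real.norm_eq_abs, abs_of_nonneg (rpow_nonneg (norm_nonneg x) _),
      ← Real.rpow_add_one' (norm_nonneg x) (by intro h; linarith [h] : p - 2 + 1 ≠ 0)]
    congr 1
    ring
  have h2 : ‖iteratedFDeriv ℝ 2 f x‖ = ‖fderiv ℝ (fderiv ℝ f) x‖ := by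
    rw [← norm_iteratedFDeriv_fderiv, ← norm_iteratedFDeriv_fderiv, norm_iteratedFDeriv_zero]
  rw [h2, hfd, hgradnorm]
  calc ‖fderiv ℝ (fun y : EuclideanSpace ℝ (Fin d) => (‖y‖ ^ (p - 2)) • innerSL ℝ y) x‖
      ≤ (p - 1) * ‖x‖ ^ (p - 2) := norm_fderiv_F_le p hp x
    _ ≤ ((p - 2) / L₁) ^ (p - 2) + L₁ * ‖x‖ ^ (p - 1) := key_scalar hp hL₁ (norm_nonneg x)
end

section
/- For each L₁ ∈ [0, 1], the function f(x) = ln(1 + e^x) on ℝ satisfies |f''(x)| ≤ L₀ + L₁|f'(x)| for all x ∈ ℝ, with L₀ = (1 - L₁)²/4, and this L₀ is the smallest such constant (i.e., sup_x (|f''(x)| - L₁|f'(x)|) = (1 - L₁)²/4). -/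
noncomputable def logisticP (x : ℝ) : ℝ := Real.exp x / (1 + Real.exp x)

lemma logisticP_pos (x : ℝ) : 0 < logisticP x := by
  unfold logisticP; positivity

lemma logisticP_lt_one (x : ℝ) : logisticP x < 1 := by
  unfold logisticP
  rw [div_lt_one (by positivity)]
  linarith [Real.exp_pos x]

lemma hasDerivAt_f (x : ℝ) :
    HasDerivAt (fun t : ℝ => Real.log (1 + Real.exp t)) (logisticP x) x := by
  have h : (0:ℝ) < 1 + Real.exp x := by positivity
  have := ((Real.hasDerivAt_exp x).const_add 1).log h.ne'
  simpa [logisticP, div_eq_mul_inv, mul_comm] using this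

lemma deriv_f : deriv (fun t : ℝ => Real.log (1 + Real.exp t)) = logisticP := by
  funext x; exact (hasDerivAt_f x).deriv

lemma hasDerivAt_P (x : ℝ) :
    HasDerivAt logisticP (logisticP x * (1 - logisticP x)) x := by
  have h : (0:ℝ) < 1 + Real.exp x := by positivity
  have := (Real.hasDerivAt_exp x).div ((Real.hasDerivAt_exp x).const_add 1) h.ne'
  refine this.congr_deriv ?_
  unfold logisticP
  field_simp

lemma deriv2_f (x : ℝ) :
    deriv (deriv (fun t : ℝ => Real.log (1 + Real.exp t))) x
      = logisticP x * (1 - logisticP x) := by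
  rw [deriv_f]; exact (hasDerivAt_P x).deriv

lemma logisticP_surj {q : ℝ} (hq : q ∈ Set.Ioo (0:ℝ) 1) : ∃ x, logisticP x = q := by
  obtain ⟨h0, h1⟩ := hq
  refine ⟨Real.log (q / (1 - q)), ?_⟩
  have h1q : (1:ℝ) - q ≠ 0 := by linarith
  have hpos : 0 < q / (1 - q) := div_pos h0 (by linarith)
  unfold logisticP
  rw [Real.exp_log hpos]
  field_simp
  ring

theorem logistic_is_L0L1_smooth (L₁ : ℝ) (hL₁ : L₁ ∈ Set.Icc (0 : ℝ) 1) :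
    (∀ x : ℝ,
        |deriv (deriv fun t : ℝ => Real.log (1 + Real.exp t)) x| ≤
          (1 - L₁) ^ 2 / 4 + L₁ * |deriv (fun t : ℝ => Real.log (1 + Real.exp t)) x|) ∧
    IsLUB (Set.range fun x : ℝ =>
        |deriv (deriv fun t : ℝ => Real.log (1 + Real.exp t)) x| -
          L₁ * |deriv (fun t : ℝ => Real.log (1 + Real.exp t)) x|)
      ((1 - L₁) ^ 2 / 4) := by
  obtain ⟨hL0, hL1⟩ := hL₁
  have key : ∀ x : ℝ,
      |deriv (deriv fun t : ℝ => Real.log (1 + Real.exp t)) x| -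
        L₁ * |deriv (fun t : ℝ => Real.log (1 + Real.exp t)) x|
      = logisticP x * (1 - logisticP x) - L₁ * logisticP x := by
    intro x
    rw [deriv2_f, deriv_f]
    have h0 := logisticP_pos x
    have h1 := logisticP_lt_one x
    rw [abs_of_pos (by nlinarith), abs_of_pos h0]
  have bound : ∀ x : ℝ,
      logisticP x * (1 - logisticP x) - L₁ * logisticP x ≤ (1 - L₁) ^ 2 / 4 := by
    intro x
    nlinarith [sq_nonneg ((1 - L₁) / 2 - logisticP x)]
  constructor
  · intro x
    have := bound x
    have := key x
    linarith [key x, bound x]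
  · constructor
    · rintro y ⟨x, rfl⟩
      exact le_trans (le_of_eq (key x)) (bound x)
    · intro b hb
      have hb' : ∀ x : ℝ, logisticP x * (1 - logisticP x) - L₁ * logisticP x ≤ b := by
        intro x
        have h2 : |deriv (deriv fun t : ℝ => Real.log (1 + Real.exp t)) x| -
            L₁ * |deriv (fun t : ℝ => Real.log (1 + Real.exp t)) x| ≤ b := hb ⟨x, rfl⟩
        rwa [key x] at h2
      rcases lt_or_eq_of_le hL1 with h | h
      · -- attained at p = (1 - L₁)/2
        obtain ⟨x, hx⟩ := logisticP_surj (q := (1 - L₁)/2)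
          ⟨by linarith, by linarith⟩
        have := hb' x
        rw [hx] at this
        nlinarith
      · -- L₁ = 1 : sup is 0, approached as p → 0
        subst h
        simp only [sub_self, ne_eq, OfNat.ofNat_ne_zero, not_false_eq_true,
          zero_pow, zero_div] at *
        by_contra hc
        push_neg at hc
        set ε := Real.sqrt (-b) / 2 with hε
        have hεpos : 0 < ε := by
          have : 0 < Real.sqrt (-b) := Real.sqrt_pos.mpr (by linarith)
          positivity
        set q := min (1/2 : ℝ) ε with hq
        have hq0 : 0 < q := lt_min (by norm_num) hεpos
        have hq1 : q < 1 := lt_of_le_of_lt (min_le_left _ _) (by norm_num)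
        obtain ⟨x, hx⟩ := logisticP_surj ⟨hq0, hq1⟩
        have hbx := hb' x
        rw [hx] at hbx
        have hqε : q ≤ ε := min_le_right _ _
        have hsq : Real.sqrt (-b) ^ 2 = -b := Real.sq_sqrt (by linarith)
        nlinarith
end

section
/- Let f: ℝ → ℝ be twice continuously differentiable with |f''(t)| ≤ L₀ + L₁|f'(t)| for all t, let a ∈ ℝ^d, b ∈ ℝ, and define h(x) = f(⟨a, x⟩ + b). Then ‖∇²h(x)‖ ≤ ‖a‖²L₀ + ‖a‖L₁‖∇h(x)‖ for all x ∈ ℝ^d. -/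
open RealInnerProductSpace

theorem affine_substitution_L0L1_smooth {d : ℕ}
    (f : ℝ → ℝ) (L₀ L₁ : ℝ) (a : EuclideanSpace ℝ (Fin d)) (b : ℝ)
    (hf : ContDiff ℝ 2 f)
    (hsmooth : ∀ t : ℝ, |deriv (deriv f) t| ≤ L₀ + L₁ * |deriv f t|) :
    ∀ x : EuclideanSpace ℝ (Fin d),
      ‖iteratedFDeriv ℝ 2 (fun z : EuclideanSpace ℝ (Fin d) => f (⟪a, z⟫ + b)) x‖ ≤
        ‖a‖ ^ 2 * L₀ +
          ‖a‖ * L₁ * ‖gradient (fun z : EuclideanSpace ℝ (Fin d) => f (⟪a, z⟫ + b)) x‖ := by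
  intro x
  have hfd : Differentiable ℝ f := hf.differentiable (by norm_num)
  have hf1 : ContDiff ℝ 1 (deriv f) := by
    have := (contDiff_succ_iff_deriv (n := 1)).mp (by exact_mod_cast hf)
    exact this.2.2
  have hfd' : Differentiable ℝ (deriv f) := hf1.differentiable one_ne_zero
  -- derivative of the inner map
  have hg : ∀ z : EuclideanSpace ℝ (Fin d), HasFDerivAt (fun z : EuclideanSpace ℝ (Fin d) => ⟪a, z⟫ + b) (innerSL ℝ a) z := by
    intro z
    simpa using ((innerSL ℝ a).hasFDerivAt (x := z)).add_const b
  -- first derivative formula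
  have hD : ∀ z : EuclideanSpace ℝ (Fin d), HasFDerivAt (fun z : EuclideanSpace ℝ (Fin d) => f (⟪a, z⟫ + b))
      (deriv f (⟪a, z⟫ + b) • innerSL ℝ a) z := by
    intro z
    exact (hfd (⟪a, z⟫ + b)).hasDerivAt.comp_hasFDerivAt z (hg z)
  have hD' : (fderiv ℝ (fun z : EuclideanSpace ℝ (Fin d) => f (⟪a, z⟫ + b)))
      = fun z : EuclideanSpace ℝ (Fin d) => deriv f (⟪a, z⟫ + b) • innerSL ℝ a := by
    funext z; exact (hD z).fderiv
  -- second derivative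
  have hD2 : HasFDerivAt (fun z : EuclideanSpace ℝ (Fin d) => deriv f (⟪a, z⟫ + b) • innerSL ℝ a)
      ((deriv (deriv f) (⟪a, x⟫ + b) • innerSL ℝ a).smulRight (innerSL ℝ a)) x := by
    have hc : HasFDerivAt (fun z : EuclideanSpace ℝ (Fin d) => deriv f (⟪a, z⟫ + b))
        (deriv (deriv f) (⟪a, x⟫ + b) • innerSL ℝ a) x :=
      by exact (hfd' (⟪a, x⟫ + b)).hasDerivAt.comp_hasFDerivAt x (hg x)
    exact hc.smul_const (innerSL ℝ a)
  have hD2' : fderiv ℝ (fderiv ℝ (fun z : EuclideanSpace ℝ (Fin d) => f (⟪a, z⟫ + b))) x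
      = (deriv (deriv f) (⟪a, x⟫ + b) • innerSL ℝ a).smulRight (innerSL ℝ a) := by
    rw [hD']; exact hD2.fderiv
  -- gradient formula
  have hgrad : gradient (fun z : EuclideanSpace ℝ (Fin d) => f (⟪a, z⟫ + b)) x = deriv f (⟪a, x⟫ + b) • a := by
    have : HasGradientAt (fun z : EuclideanSpace ℝ (Fin d) => f (⟪a, z⟫ + b)) (deriv f (⟪a, x⟫ + b) • a) x := by
      rw [hasGradientAt_iff_hasFDerivAt]
      have : (InnerProductSpace.toDual ℝ (EuclideanSpace ℝ (Fin d))) (deriv f (⟪a, x⟫ + b) • a)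
          = deriv f (⟪a, x⟫ + b) • innerSL ℝ a := by
        ext v
        simp [real_inner_smul_left]
      rw [this]
      exact hD x
    exact this.gradient
  have hgradnorm : ‖gradient (fun z : EuclideanSpace ℝ (Fin d) => f (⟪a, z⟫ + b)) x‖
      = |deriv f (⟪a, x⟫ + b)| * ‖a‖ := by
    rw [hgrad, norm_smul, Real.norm_eq_abs]
  rw [hgradnorm]
  have key : ‖iteratedFDeriv ℝ 2 (fun z : EuclideanSpace ℝ (Fin d) => f (⟪a, z⟫ + b)) x‖
      ≤ (L₀ + L₁ * |deriv f (⟪a, x⟫ + b)|) * ‖a‖ ^ 2 := by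
    have hC : 0 ≤ L₀ + L₁ * |deriv f (⟪a, x⟫ + b)| :=
      le_trans (abs_nonneg _) (hsmooth _)
    refine ContinuousMultilinearMap.opNorm_le_bound (mul_nonneg hC (by positivity)) fun m => ?_
    rw [iteratedFDeriv_two_apply, hD2']
    have : ((deriv (deriv f) (⟪a, x⟫ + b) • innerSL ℝ a).smulRight (innerSL ℝ a)) (m 0) (m 1)
        = deriv (deriv f) (⟪a, x⟫ + b) * ⟪a, m 0⟫ * ⟪a, m 1⟫ := by
      simp [mul_comm, mul_assoc, mul_left_comm]
    rw [this, Fin.prod_univ_two, Real.norm_eq_abs, abs_mul, abs_mul]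
    calc |deriv (deriv f) (⟪a, x⟫ + b)| * |⟪a, m 0⟫| * |⟪a, m 1⟫|
        ≤ (L₀ + L₁ * |deriv f (⟪a, x⟫ + b)|) * (‖a‖ * ‖m 0‖) * (‖a‖ * ‖m 1‖) :=
          mul_le_mul (mul_le_mul (hsmooth _) (abs_real_inner_le_norm a (m 0))
              (abs_nonneg _) hC) (abs_real_inner_le_norm a (m 1)) (abs_nonneg _)
            (mul_nonneg hC (by positivity))
      _ = (L₀ + L₁ * |deriv f (⟪a, x⟫ + b)|) * ‖a‖ ^ 2 * (‖m 0‖ * ‖m 1‖) := by ring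
  calc ‖iteratedFDeriv ℝ 2 (fun z : EuclideanSpace ℝ (Fin d) => f (⟪a, z⟫ + b)) x‖
      ≤ (L₀ + L₁ * |deriv f (⟪a, x⟫ + b)|) * ‖a‖ ^ 2 := key
    _ = ‖a‖ ^ 2 * L₀ + ‖a‖ * L₁ * (|deriv f (⟪a, x⟫ + b)| * ‖a‖) := by ring
end

section
/- Let f be (L₀, L₁)-smooth with L₀, L₁ > 0 (so the upper bound f(y) ≤ f(x) + ⟨∇f(x), y-x⟩ + (a/L₁²)φ(L₁‖y-x‖) holds with a = L₀ + L₁‖∇f(x)‖ and φ(t) = e^t - t - 1). For x with ∇f(x) ≠ 0, set g = ‖∇f(x)‖, η = 1/(L₀ + (3/2)L₁g), and T(x) = x - η∇f(x). Then f(x) - f(T(x)) ≥ g²/(2L₀ + 3L₁g). -/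
open RealInnerProductSpace

lemma phi_le {t : ℝ} (h0 : 0 ≤ t) (h1 : t ≤ 1) :
    Real.exp t - t - 1 ≤ t ^ 2 / (2 - t) := by
  have habs : |t| ≤ 1 := by rwa [abs_of_nonneg h0]
  have hb := Real.exp_bound habs (by norm_num : 0 < 3)
  have hsum : ∑ i ∈ Finset.range 3, t ^ i / (Nat.factorial i) = 1 + t + t ^ 2 / 2 := by
    simp [Finset.sum_range_succ, Nat.factorial]
  rw [hsum, abs_of_nonneg h0] at hb
  have h2 : Real.exp t - (1 + t + t ^ 2 / 2) ≤ t ^ 3 * (2 / 9) := by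
    have := (abs_le.mp hb).2
    calc Real.exp t - (1 + t + t ^ 2 / 2) ≤ t ^ 3 * ((3 : ℕ).succ / ((Nat.factorial 3) * 3)) := this
    _ = t ^ 3 * (2 / 9) := by norm_num [Nat.factorial]
  have hpos : 0 < 2 - t := by linarith
  rw [le_div_iff₀ hpos]
  nlinarith [pow_nonneg h0 3, pow_nonneg h0 4, sq_nonneg t]

theorem descent_simplified_stepsize {d : ℕ}
    (f : EuclideanSpace ℝ (Fin d) → ℝ) (L₀ L₁ : ℝ)
    (hL₀ : 0 < L₀) (hL₁ : 0 < L₁)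
    (hub : ∀ x y, f y ≤ f x + ⟪gradient f x, y - x⟫ +
      (L₀ + L₁ * ‖gradient f x‖) / L₁ ^ 2 *
        (Real.exp (L₁ * ‖y - x‖) - L₁ * ‖y - x‖ - 1))
    (x : EuclideanSpace ℝ (Fin d)) (hx : gradient f x ≠ 0) :
    f x - f (x - (1 / (L₀ + (3 / 2) * L₁ * ‖gradient f x‖)) • gradient f x) ≥
      ‖gradient f x‖ ^ 2 / (2 * L₀ + 3 * L₁ * ‖gradient f x‖) := by
  set G := gradient f x with hG
  set g := ‖G‖ with hg
  have hg0 : 0 < g := norm_pos_iff.mpr hx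
  have hden : 0 < L₀ + (3 / 2) * L₁ * g := by positivity
  set η : ℝ := 1 / (L₀ + (3 / 2) * L₁ * g) with hη
  have hη0 : 0 < η := by positivity
  have hyx : (x - η • G) - x = -(η • G) := by abel
  have hnorm : ‖(x - η • G) - x‖ = η * g := by
    rw [hyx, norm_neg, norm_smul, Real.norm_eq_abs, abs_of_pos hη0, hg]
  have hinner : ⟪G, (x - η • G) - x⟫ = -(η * g ^ 2) := by
    rw [hyx, inner_neg_right, real_inner_smul_right, real_inner_self_eq_norm_sq]
  have key := hub x (x - η • G)
  rw [hnorm, hinner] at key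
  -- bound the phi term
  set t : ℝ := L₁ * (η * g) with ht
  have ht0 : 0 ≤ t := by positivity
  have ht1 : t ≤ 1 := by
    rw [ht, hη]
    rw [mul_comm, mul_assoc, div_mul_eq_mul_div, one_mul, div_le_one hden]
    nlinarith
  have hphi := phi_le ht0 ht1
  have hcoef : (0 : ℝ) ≤ (L₀ + L₁ * g) / L₁ ^ 2 := by positivity
  have h2t : 2 - t = 2 * η * (L₀ + L₁ * g) := by
    rw [ht, hη]
    field_simp
    ring
  have heq : (L₀ + L₁ * g) / L₁ ^ 2 * (t ^ 2 / (2 - t)) = η * g ^ 2 / 2 := by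
    rw [h2t, ht]
    have ha : 0 < L₀ + L₁ * g := by positivity
    field_simp
  have hle : f (x - η • G) ≤ f x + -(η * g ^ 2) + η * g ^ 2 / 2 := by
    calc f (x - η • G) ≤ f x + -(η * g ^ 2) +
        (L₀ + L₁ * g) / L₁ ^ 2 * (Real.exp t - t - 1) := key
    _ ≤ f x + -(η * g ^ 2) + (L₀ + L₁ * g) / L₁ ^ 2 * (t ^ 2 / (2 - t)) := by
        gcongr
    _ = f x + -(η * g ^ 2) + η * g ^ 2 / 2 := by rw [heq]
  have hfinal : η * g ^ 2 / 2 = g ^ 2 / (2 * L₀ + 3 * L₁ * g) := by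
    rw [hη]
    field_simp
  have : f x - f (x - η • G) ≥ η * g ^ 2 / 2 := by linarith
  rw [hfinal] at this
  exact this
end

section
/- Let f be (L₀, L₁)-smooth with L₀, L₁ > 0. For x with g = ‖∇f(x)‖ > 0, set η = min{1/(2L₀), 1/(3L₁g)} and T(x) = x - η∇f(x). Then f(x) - f(T(x)) ≥ (1/2)·g²/(2L₀ + 3L₁g). -/
open RealInnerProductSpace

lemma exp_quad (t : ℝ) (h0 : 0 ≤ t) (h1 : t ≤ 1/3) :
    Real.exp t - t - 1 ≤ (3/5) * t^2 := by
  have hb := Real.exp_bound (x := t) (by rw [abs_of_nonneg h0]; linarith) (n := 4) (by norm_num)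
  rw [abs_of_nonneg h0] at hb
  have hs : ∑ i ∈ Finset.range 4, t ^ i / (Nat.factorial i) = 1 + t + t^2/2 + t^3/6 := by
    simp [Finset.sum_range_succ, Nat.factorial]
  rw [hs] at hb
  norm_num [Nat.factorial] at hb
  have h2 := (abs_le.mp hb).2
  nlinarith [pow_le_pow_left₀ h0 h1 3, pow_le_pow_left₀ h0 h1 4, sq_nonneg t]

theorem descent_clipped_stepsize {d : ℕ}
    (f : EuclideanSpace ℝ (Fin d) → ℝ) (L₀ L₁ : ℝ)
    (hL₀ : 0 < L₀) (hL₁ : 0 < L₁)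
    (hub : ∀ x y, f y ≤ f x + ⟪gradient f x, y - x⟫ +
      (L₀ + L₁ * ‖gradient f x‖) / L₁ ^ 2 *
        (Real.exp (L₁ * ‖y - x‖) - L₁ * ‖y - x‖ - 1))
    (x : EuclideanSpace ℝ (Fin d)) (hx : 0 < ‖gradient f x‖) :
    f x - f (x - (min (1 / (2 * L₀)) (1 / (3 * L₁ * ‖gradient f x‖))) • gradient f x) ≥
      (1 / 2) * (‖gradient f x‖ ^ 2 / (2 * L₀ + 3 * L₁ * ‖gradient f x‖)) := by
  set G := gradient f x with hG
  set g := ‖G‖ with hg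
  set η := min (1 / (2 * L₀)) (1 / (3 * L₁ * g)) with hη
  have hη1 : η ≤ 1 / (2 * L₀) := min_le_left _ _
  have hη2 : η ≤ 1 / (3 * L₁ * g) := min_le_right _ _
  have hηpos : 0 < η := lt_min (by positivity) (by positivity)
  set y := x - η • G with hy
  have hyx : y - x = -(η • G) := by rw [hy]; abel
  have hnorm : ‖y - x‖ = η * g := by
    rw [hyx, norm_neg, norm_smul, Real.norm_eq_abs, abs_of_pos hηpos]
  have hinner : ⟪G, y - x⟫ = -(η * g ^ 2) := by
    rw [hyx, inner_neg_right, real_inner_smul_right, real_inner_self_eq_norm_sq]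
  have key := hub x y
  rw [← hG, ← hg, hinner, hnorm] at key
  set t := L₁ * (η * g) with ht
  have ht0 : 0 ≤ t := by positivity
  have ht1 : t ≤ 1/3 := by
    rw [ht]
    have h1 : η * g ≤ (1 / (3 * L₁ * g)) * g :=
      mul_le_mul_of_nonneg_right hη2 hx.le
    calc L₁ * (η * g) ≤ L₁ * ((1 / (3 * L₁ * g)) * g) :=
          mul_le_mul_of_nonneg_left h1 hL₁.le
      _ = 1/3 := by field_simp
  have hphi := exp_quad t ht0 ht1
  have hC : (0:ℝ) ≤ (L₀ + L₁ * g) / L₁ ^ 2 := by positivity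
  have hbound : (L₀ + L₁ * g) / L₁ ^ 2 * (Real.exp t - t - 1)
      ≤ (3/5) * (L₀ + L₁ * g) * η ^ 2 * g ^ 2 := by
    calc (L₀ + L₁ * g) / L₁ ^ 2 * (Real.exp t - t - 1)
        ≤ (L₀ + L₁ * g) / L₁ ^ 2 * ((3/5) * t ^ 2) :=
          mul_le_mul_of_nonneg_left hphi hC
      _ = (3/5) * (L₀ + L₁ * g) * η ^ 2 * g ^ 2 := by
          rw [ht]; field_simp
  have hfy : f y ≤ f x - η * g ^ 2 + (3/5) * (L₀ + L₁ * g) * η ^ 2 * g ^ 2 := by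
    linarith
  clear_value t y η g G
  have h56 : (L₀ + L₁ * g) * η ≤ 5/6 := by
    have e1 : L₀ * η ≤ 1/2 := by
      calc L₀ * η ≤ L₀ * (1 / (2 * L₀)) := mul_le_mul_of_nonneg_left hη1 hL₀.le
        _ = 1/2 := by field_simp
    have e2 : L₁ * g * η ≤ 1/3 := by
      calc L₁ * g * η ≤ L₁ * g * (1 / (3 * L₁ * g)) :=
            mul_le_mul_of_nonneg_left hη2 (by positivity)
        _ = 1/3 := by field_simp
    nlinarith
  have hLg : 0 < L₁ * g := mul_pos hL₁ hx
  have hsum : 0 < 2 * L₀ + 3 * L₁ * g := by linarith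
  have hηlb : 1 / (2 * L₀ + 3 * L₁ * g) ≤ η := by
    rw [hη]
    apply le_min
    · apply one_div_le_one_div_of_le (by linarith)
      linarith
    · apply one_div_le_one_div_of_le (by linarith)
      linarith
  have hg2 : (0:ℝ) ≤ g ^ 2 := by positivity
  have haux := mul_le_mul_of_nonneg_right h56 (show (0:ℝ) ≤ (3/5) * (η * g^2) by positivity)
  have haux2 : (3/5) * (L₀ + L₁ * g) * η ^ 2 * g ^ 2 ≤ (1/2) * (η * g ^ 2) := by
    linarith [haux]
  have step : f x - f y ≥ (1/2) * (η * g ^ 2) := by linarith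
  have h1S : 1 ≤ η * (2 * L₀ + 3 * L₁ * g) := (div_le_iff₀ hsum).mp hηlb
  have hfin : g ^ 2 / (2 * L₀ + 3 * L₁ * g) ≤ η * g ^ 2 := by
    rw [div_le_iff₀ hsum]
    have h2 := mul_le_mul_of_nonneg_left h1S hg2
    linarith
  have final : (1/2) * (g ^ 2 / (2 * L₀ + 3 * L₁ * g)) ≤ (1/2) * (η * g ^ 2) := by
    linarith
  calc (1 / 2) * (g ^ 2 / (2 * L₀ + 3 * L₁ * g)) ≤ (1/2) * (η * g ^ 2) := final
    _ ≤ f x - f y := step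
end

section
/- Suppose a₁, …, a_K > 0 satisfy, for each k, √(A_k/L) = a_k where A_k = a₁ + ⋯ + a_k and L > 0. Then A_K ≥ K²/(4L) for all K ≥ 1. -/
theorem agmsdr_coefficient_growth (L : ℝ) (hL : 0 < L)
    (K : ℕ) (hK : 1 ≤ K) (a A : ℕ → ℝ)
    (ha : ∀ k, 1 ≤ k → k ≤ K → 0 < a k)
    (hA : ∀ k, A k = ∑ i ∈ Finset.Icc 1 k, a i)
    (heq : ∀ k, 1 ≤ k → k ≤ K → Real.sqrt (A k / L) = a k) :
    A K ≥ (K : ℝ) ^ 2 / (4 * L) := by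
  have hcL : 0 < Real.sqrt L := Real.sqrt_pos.mpr hL
  have hAnn : ∀ k, k ≤ K → 0 ≤ A k := by
    intro k hk
    rw [hA]
    exact Finset.sum_nonneg fun i hi =>
      le_of_lt (ha i (Finset.mem_Icc.mp hi).1 (le_trans (Finset.mem_Icc.mp hi).2 hk))
  have key : ∀ k, k ≤ K → (k : ℝ) / (2 * Real.sqrt L) ≤ Real.sqrt (A k) := by
    intro k
    induction k with
    | zero =>
      intro _
      simp [Real.sqrt_nonneg]
    | succ k ih =>
      intro hk
      have hk' : k ≤ K := Nat.le_of_succ_le hk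
      have ht := ih hk'
      have hAkk : A (k + 1) = A k + a (k + 1) := by
        rw [hA, hA, ← Finset.sum_Icc_succ_top (by omega : 1 ≤ k + 1)]
      have hapos : 0 < a (k + 1) := ha _ (by omega) hk
      have hApos : 0 < A (k + 1) := by
        have := hAnn k hk'
        linarith
      have ha1 : a (k + 1) = Real.sqrt (A (k + 1)) / Real.sqrt L := by
        rw [← heq (k + 1) (by omega) hk, Real.sqrt_div (hAnn _ hk)]
      set s := Real.sqrt (A (k + 1)) with hs
      set t := Real.sqrt (A k) with htdef
      have hs2 : s ^ 2 = A (k + 1) := Real.sq_sqrt (hAnn _ hk)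
      have ht2 : t ^ 2 = A k := Real.sq_sqrt (hAnn _ hk')
      have hspos : 0 < s := Real.sqrt_pos.mpr hApos
      have htnn : 0 ≤ t := Real.sqrt_nonneg _
      have heq2 : Real.sqrt L * s ^ 2 = Real.sqrt L * t ^ 2 + s := by
        rw [hs2, ht2, hAkk, ha1]
        field_simp
      -- from heq2: sqrt L * (s - t) * (s + t) = s, and s + t ≤ 2 s
      have h2 : 2 * Real.sqrt L * t + 1 ≤ 2 * Real.sqrt L * s := by
        nlinarith [mul_nonneg hcL.le (sq_nonneg (s - t)), hspos, htnn]
      have hst : t + 1 / (2 * Real.sqrt L) ≤ s := by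
        have h3 : 1 / (2 * Real.sqrt L) ≤ s - t := by
          rw [div_le_iff₀ (by positivity)]
          nlinarith [h2]
        linarith
      have hcast : ((k : ℝ) + 1) / (2 * Real.sqrt L) = (k : ℝ) / (2 * Real.sqrt L) + 1 / (2 * Real.sqrt L) := by
        field_simp
      push_cast
      rw [hcast]
      linarith
  have hfin := key K le_rfl
  have hAK : 0 ≤ A K := hAnn K le_rfl
  have h1 : ((K : ℝ) / (2 * Real.sqrt L)) ^ 2 ≤ Real.sqrt (A K) ^ 2 := by
    apply sq_le_sq' _ hfin
    have : 0 ≤ (K : ℝ) / (2 * Real.sqrt L) := by positivity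
    linarith [Real.sqrt_nonneg (A K)]
  rw [Real.sq_sqrt hAK] at h1
  have hL2 : Real.sqrt L ^ 2 = L := Real.sq_sqrt hL.le
  calc A K ≥ ((K : ℝ) / (2 * Real.sqrt L)) ^ 2 := h1
    _ = (K : ℝ) ^ 2 / (4 * L) := by
        rw [div_pow]
        congr 1
        rw [mul_pow]
        rw [hL2]
        norm_num
end
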